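/- If G is a graph with χ'(G) = 2, then vs_{χ'}(G) = vs_Δ(G). -/

import Mathlib

open SimpleGraph

open scoped Classical ENNReal

/-- `H` is (isomorphic to) a subgraph of `G`. -/
def IsSubgraphOf {α β : Type} (H : SimpleGraph α) (G : SimpleGraph β) : Prop :=
  ∃ f : α ↪ β, ∀ u v : α, H.Adj u v → G.Adj (f u) (f v)

/-- The `ρ`-vertex stability number of `G`: the minimum number of vertices of `G`
whose removal results in a graph `H ⊆ G` with `ρ H ≠ ρ G` or with no edges. -/
noncomputable def vsNum {V : Type} [Fintype V] [DecidableEq V]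
    (ρ : ∀ (W : Type) [Fintype W] [DecidableEq W], SimpleGraph W → ℝ≥0∞)
    (G : SimpleGraph V) : ℕ :=
  sInf {n | ∃ S : Finset V, S.card = n ∧
    (ρ _ (G.induce (↑Sᶜ : Set V)) ≠ ρ _ G ∨ (G.induce (↑Sᶜ : Set V)).edgeSet = ∅)}

/-- `ρ` is monotone increasing: `H ⊆ G` implies `ρ H ≤ ρ G`. -/
def MonotoneIncrInv
    (ρ : ∀ (W : Type) [Fintype W] [DecidableEq W], SimpleGraph W → ℝ≥0∞) : Prop :=
  ∀ (α β : Type) [Fintype α] [DecidableEq α] [Fintype β] [DecidableEq β]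
    (H : SimpleGraph α) (G : SimpleGraph β), IsSubgraphOf H G → ρ _ H ≤ ρ _ G

/-- `ρ` is monotone decreasing: `H ⊆ G` implies `ρ H ≥ ρ G`. -/
def MonotoneDecrInv
    (ρ : ∀ (W : Type) [Fintype W] [DecidableEq W], SimpleGraph W → ℝ≥0∞) : Prop :=
  ∀ (α β : Type) [Fintype α] [DecidableEq α] [Fintype β] [DecidableEq β]
    (H : SimpleGraph α) (G : SimpleGraph β), IsSubgraphOf H G → ρ _ G ≤ ρ _ H

/-- `ρ` is maxing: for disjoint graphs, `ρ (H₁ ∪ H₂) = max (ρ H₁) (ρ H₂)`. -/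
def MaxingInv
    (ρ : ∀ (W : Type) [Fintype W] [DecidableEq W], SimpleGraph W → ℝ≥0∞) : Prop :=
  ∀ (α β : Type) [Fintype α] [DecidableEq α] [Fintype β] [DecidableEq β]
    (G : SimpleGraph α) (H : SimpleGraph β), ρ _ (G ⊕g H) = max (ρ _ G) (ρ _ H)

/-- The chromatic index: minimum number of colors in a proper edge coloring. -/
noncomputable def chromIndex {V : Type} (G : SimpleGraph V) : ℕ :=
  sInf {k | ∃ c : G.edgeSet → Fin k, ∀ e₁ e₂ : G.edgeSet, e₁ ≠ e₂ →
    (∃ v, v ∈ (e₁ : Sym2 V) ∧ v ∈ (e₂ : Sym2 V)) → c e₁ ≠ c e₂}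

/-- Maximum degree. -/
noncomputable def maxDeg {V : Type} [Fintype V] (G : SimpleGraph V) : ℕ :=
  Finset.univ.sup fun v => (G.neighborSet v).ncard

/-- Minimum degree. -/
noncomputable def minDeg {V : Type} [Fintype V] (G : SimpleGraph V) : ℕ :=
  sInf {d | ∃ v, (G.neighborSet v).ncard = d}

/-- The chromatic vertex stability number `vs_{χ'}(G)`. -/
noncomputable def vsChi {V : Type} [Fintype V] [DecidableEq V] (G : SimpleGraph V) : ℕ :=
  if G.edgeSet = ∅ then 0 else
    sInf {n | ∃ S : Finset V, S.card = n ∧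
      chromIndex (G.induce (↑Sᶜ : Set V)) ≠ chromIndex G}

/-- The `Δ`-vertex stability number `vs_Δ(G)`. -/
noncomputable def vsDelta {V : Type} [Fintype V] [DecidableEq V] (G : SimpleGraph V) : ℕ :=
  sInf {n | ∃ S : Finset V, S.card = n ∧
    (maxDeg (G.induce (↑Sᶜ : Set V)) ≠ maxDeg G ∨ (G.induce (↑Sᶜ : Set V)).edgeSet = ∅)}

/-- The `δ`-vertex stability number `vs_δ(G)`. -/
noncomputable def vsMinDeg {V : Type} [Fintype V] [DecidableEq V] (G : SimpleGraph V) : ℕ :=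
  sInf {n | ∃ S : Finset V, S.card = n ∧
    (minDeg (G.induce (↑Sᶜ : Set V)) ≠ minDeg G ∨ (G.induce (↑Sᶜ : Set V)).edgeSet = ∅)}

/-- `class G = χ'(G) - Δ(G) + 1 ∈ {1,2}`. -/
noncomputable def classInv {V : Type} [Fintype V] (G : SimpleGraph V) : ℕ :=
  chromIndex G - maxDeg G + 1

/-- The `class`-vertex stability number. -/
noncomputable def vsClass {V : Type} [Fintype V] [DecidableEq V] (G : SimpleGraph V) : ℕ :=
  sInf {n | ∃ S : Finset V, S.card = n ∧
    (classInv (G.induce (↑Sᶜ : Set V)) ≠ classInv G ∨ (G.induce (↑Sᶜ : Set V)).edgeSet = ∅)}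

/-- Number of connected components. -/
noncomputable def numComponents {V : Type} (G : SimpleGraph V) : ℕ :=
  Nat.card G.ConnectedComponent

/-- The `ω`-vertex stability number (ω = number of components). -/
noncomputable def vsOmega {V : Type} [Fintype V] [DecidableEq V] (G : SimpleGraph V) : ℕ :=
  sInf {n | ∃ S : Finset V, S.card = n ∧
    (numComponents (G.induce (↑Sᶜ : Set V)) ≠ numComponents G ∨
      (G.induce (↑Sᶜ : Set V)).edgeSet = ∅)}

/-- Vertex connectivity: minimum number of vertices whose removal yields a graph that is
not connected, or the single-vertex graph `K₁`. -/
noncomputable def kappa {V : Type} [Fintype V] [DecidableEq V] (G : SimpleGraph V) : ℕ :=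
  sInf {n | ∃ S : Finset V, S.card = n ∧
    (¬ (G.induce (↑Sᶜ : Set V)).Connected ∨ Fintype.card ↥(↑Sᶜ : Set V) = 1)}

/-- `γ(V_Δ)`: minimum size of a set `Γ` of vertices such that every vertex of maximum
degree has a neighbor in `Γ`. -/
noncomputable def gammaMaxDeg {V : Type} [Fintype V] [DecidableEq V] (G : SimpleGraph V) : ℕ :=
  sInf {n | ∃ Γ : Finset V, Γ.card = n ∧
    ∀ v : V, (G.neighborSet v).ncard = maxDeg G → ∃ u ∈ Γ, G.Adj u v}

/-- The wheel graph `W n`: cycle `C n` joined with one extra vertex. -/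
def wheelGraph (n : ℕ) : SimpleGraph (Option (Fin n)) :=
  SimpleGraph.fromRel (fun x y =>
    match x, y with
    | none, some _ => True
    | some i, some j => (j : ℕ) = ((i : ℕ) + 1) % n
    | _, _ => False)

section Aux

variable {V : Type} [Fintype V]

/-- The defining set of `chromIndex` is nonempty and `chromIndex G` belongs to it. -/
lemma chromIndex_spec (G : SimpleGraph V) :
    ∃ c : G.edgeSet → Fin (chromIndex G), ∀ e₁ e₂ : G.edgeSet, e₁ ≠ e₂ →
      (∃ v, v ∈ (e₁ : Sym2 V) ∧ v ∈ (e₂ : Sym2 V)) → c e₁ ≠ c e₂ := by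
  have hne : {k | ∃ c : G.edgeSet → Fin k, ∀ e₁ e₂ : G.edgeSet, e₁ ≠ e₂ →
      (∃ v, v ∈ (e₁ : Sym2 V) ∧ v ∈ (e₂ : Sym2 V)) → c e₁ ≠ c e₂}.Nonempty := by
    refine ⟨Nat.card G.edgeSet, fun e => (Finite.equivFin G.edgeSet) e, ?_⟩
    intro e₁ e₂ hne _ heq
    exact hne ((Finite.equivFin G.edgeSet).injective heq)
  exact Nat.sInf_mem hne

lemma edge_mem_of_induce {s : Set V} (G : SimpleGraph V)
    (e : Sym2 s) (he : e ∈ (G.induce s).edgeSet) :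
    Sym2.map Subtype.val e ∈ G.edgeSet := by
  induction e using Sym2.ind with
  | _ u v => simpa using he

lemma chromIndex_induce_le (G : SimpleGraph V) (s : Set V) :
    chromIndex (G.induce s) ≤ chromIndex G := by
  obtain ⟨c, hc⟩ := chromIndex_spec G
  apply Nat.sInf_le
  refine ⟨fun e => c ⟨Sym2.map Subtype.val e.1, edge_mem_of_induce G e.1 e.2⟩, ?_⟩
  rintro e₁ e₂ hne ⟨v, hv₁, hv₂⟩
  apply hc
  · intro heq
    apply hne
    apply Subtype.ext
    exact Sym2.map.injective Subtype.val_injective (congrArg Subtype.val heq)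
  · exact ⟨(v : V), Sym2.mem_map.2 ⟨v, hv₁, rfl⟩, Sym2.mem_map.2 ⟨v, hv₂, rfl⟩⟩

lemma maxDeg_le_chromIndex (G : SimpleGraph V) :
    maxDeg G ≤ chromIndex G := by
  obtain ⟨c, hc⟩ := chromIndex_spec G
  apply Finset.sup_le
  intro v _
  have hinj : Function.Injective (fun w : G.neighborSet v =>
      c ⟨s(v, w.1), w.2⟩) := by
    intro w₁ w₂ hw
    by_contra hne
    have hnev : w₁.1 ≠ w₂.1 := fun hh => hne (Subtype.ext hh)
    refine hc _ _ ?_ ⟨v, ?_, ?_⟩ hw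
    · intro heq
      exact hnev (by simpa using Sym2.congr_right.mp (congrArg Subtype.val heq))
    · simp
    · simp
  calc (G.neighborSet v).ncard = Nat.card (G.neighborSet v) :=
        (Nat.card_coe_set_eq _).symm
    _ ≤ Nat.card (Fin (chromIndex G)) := Nat.card_le_card_of_injective _ hinj
    _ = chromIndex G := by simp

lemma chromIndex_le_one_of_maxDeg_le_one (G : SimpleGraph V)
    (h : maxDeg G ≤ 1) : chromIndex G ≤ 1 := by
  apply Nat.sInf_le
  refine ⟨fun _ => 0, ?_⟩
  rintro e₁ e₂ hne ⟨v, hv₁, hv₂⟩ _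
  obtain ⟨a, ha⟩ := Sym2.mem_iff_exists.mp hv₁
  obtain ⟨b, hb⟩ := Sym2.mem_iff_exists.mp hv₂
  have hadj₁ : G.Adj v a := by have := e₁.2; rw [ha] at this; exact this
  have hadj₂ : G.Adj v b := by have := e₂.2; rw [hb] at this; exact this
  have hab : a ≠ b := by
    intro hh
    apply hne
    apply Subtype.ext
    rw [ha, hb, hh]
  have h2 : 1 < (G.neighborSet v).ncard := by
    apply Set.one_lt_ncard_iff (Set.toFinite _) |>.2
    exact ⟨a, b, hadj₁, hadj₂, hab⟩
  have hle : (G.neighborSet v).ncard ≤ maxDeg G :=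
    Finset.le_sup (f := fun v => (G.neighborSet v).ncard) (Finset.mem_univ v)
  omega

lemma maxDeg_induce_le (G : SimpleGraph V) (s : Set V) [Fintype s] :
    maxDeg (G.induce s) ≤ maxDeg G := by
  apply Finset.sup_le
  intro v _
  have hinj : Function.Injective (fun w : (G.induce s).neighborSet v =>
      (⟨(w.1 : V), w.2⟩ : G.neighborSet (v : V))) := by
    intro w₁ w₂ hw
    simp only [Subtype.mk.injEq] at hw
    exact Subtype.ext (Subtype.ext (congrArg (fun x : G.neighborSet (v : V) => (x : V)) hw))
  have : ((G.induce s).neighborSet v).ncard ≤ (G.neighborSet (v : V)).ncard := by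
    rw [← Nat.card_coe_set_eq, ← Nat.card_coe_set_eq]
    exact Nat.card_le_card_of_injective _ hinj
  exact le_trans this (Finset.le_sup (f := fun v => (G.neighborSet v).ncard) (Finset.mem_univ (v : V)))

lemma chromIndex_eq_zero_of_edgeSet_empty {W : Type} (G : SimpleGraph W)
    (h : G.edgeSet = ∅) : chromIndex G = 0 := by
  have : chromIndex G ≤ 0 := by
    apply Nat.sInf_le
    refine ⟨fun e => absurd e.2 (by simp [h]), ?_⟩
    intro e₁ _ _ _ _
    exact absurd e₁.2 (by simp [h])
  omega

end Aux

set_option maxHeartbeats 2000000 in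
/-- if `χ'(G) = 2`, then `vs_{χ'}(G) = vs_Δ(G)`. -/
theorem vsChi_eq_vsDelta_of_chromIndex_two {V : Type} [Fintype V] [DecidableEq V]
    (G : SimpleGraph V) (h : chromIndex G = 2) :
    vsChi G = vsDelta G := by
  have hG0 : G.edgeSet ≠ ∅ := by
    intro he
    rw [chromIndex_eq_zero_of_edgeSet_empty G he] at h
    exact absurd h (by omega)
  have hΔle : maxDeg G ≤ 2 := h ▸ maxDeg_le_chromIndex G
  have hΔge : 2 ≤ maxDeg G := by
    by_contra hlt
    have := chromIndex_le_one_of_maxDeg_le_one G (by omega)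
    omega
  rw [vsChi, if_neg hG0, vsDelta]
  congr 1
  ext n
  constructor
  · rintro ⟨S, hS, hne⟩
    refine ⟨S, hS, Or.inl ?_⟩
    have h1 : chromIndex (G.induce (↑Sᶜ : Set V)) ≤ 2 := h ▸ chromIndex_induce_le G _
    have h2 : chromIndex (G.induce (↑Sᶜ : Set V)) ≤ 1 := by
      rw [h] at hne; omega
    have h3 : maxDeg (G.induce (↑Sᶜ : Set V)) ≤ 1 :=
      le_trans (maxDeg_le_chromIndex _) h2
    omega
  · rintro ⟨S, hS, hd⟩
    refine ⟨S, hS, ?_⟩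
    rcases hd with hd | hd
    · have h1 : maxDeg (G.induce (↑Sᶜ : Set V)) ≤ 2 :=
        le_trans (maxDeg_induce_le G _) hΔle
      have h2 : maxDeg (G.induce (↑Sᶜ : Set V)) ≤ 1 := by omega
      have h3 := chromIndex_le_one_of_maxDeg_le_one _ h2
      omega
    · rw [chromIndex_eq_zero_of_edgeSet_empty _ hd, h]
      omega
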